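/- Suppose X₁, X₂, …, X_n and Y₁, Y₂, …, Y_n are two families of independent d-dimensional random vectors (d ≥ 1), with cumulative distribution functions F₁, …, F_n and G₁, …, G_n respectively. Let X = X₁ + ⋯ + X_n and Y = Y₁ + ⋯ + Y_n, with cumulative distribution functions F and G. If sup_{x ∈ ℝ^d} |F_k(x) − G_k(x)| ≤ ε_k for each 1 ≤ k ≤ n, then sup_{x ∈ ℝ^d} |F(x) − G(x)| ≤ ε₁ + ε₂ + ⋯ + ε_n. -/

import Mathlib

/-!
The law of a sum of independent vectors is the convolution of their laws, and convolving
with a probability measure `κ` cannot increase the uniform distance between CDFs, since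
`(m ∗ κ)(Iic x) = ∫ m(Iic (x - y)) dκ(y)`. Replacing the summands one at a time therefore
costs at most `ε_k` at step `k`.
-/

open MeasureTheory ProbabilityTheory Filter

/-- The (joint) cumulative distribution function of a `d`-dimensional random vector `Z`:
`x ↦ P(Z⁽¹⁾ ≤ x₁, …, Z⁽ᵈ⁾ ≤ x_d)`. -/
noncomputable def vecCDF {Ω : Type*} [MeasurableSpace Ω] (μ : Measure Ω) {d : ℕ}
    (Z : Ω → Fin d → ℝ) (x : Fin d → ℝ) : ℝ :=
  (μ {ω | ∀ i : Fin d, Z ω i ≤ x i}).toReal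

open Set

namespace MeasureTheory.Measure

variable {E : Type*} [AddCommGroup E] [PartialOrder E] [IsOrderedAddMonoid E]
  [MeasurableSpace E] [MeasurableAdd₂ E] [TopologicalSpace E] [OrderClosedTopology E]
  [OpensMeasurableSpace E]

theorem measurable_measure_Iic_sub (m : Measure E) [SFinite m] (x : E) :
    Measurable fun y => m (Iic (x - y)) := by
  simp_rw [← preimage_add_const_Iic]
  exact measurable_measure_prodMk_right (measurable_add measurableSet_Iic)

theorem conv_apply_Iic (m κ : Measure E) [SFinite m] [SFinite κ] (x : E) :
    (m ∗ κ) (Iic x) = ∫⁻ y, m (Iic (x - y)) ∂κ := by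
  rw [conv, map_apply measurable_add measurableSet_Iic,
    prod_apply_symm (measurable_add measurableSet_Iic)]
  simp_rw [← preimage_add_const_Iic]
  rfl

theorem measureReal_conv_Iic (m κ : Measure E) [IsFiniteMeasure m] [SFinite κ] (x : E) :
    (m ∗ κ).real (Iic x) = ∫ y, m.real (Iic (x - y)) ∂κ := by
  rw [measureReal_def, conv_apply_Iic,
    ← integral_toReal (measurable_measure_Iic_sub m x).aemeasurable
      (ae_of_all _ fun y => measure_lt_top m _)]
  rfl

theorem abs_measureReal_conv_Iic_sub_le {m₁ m₂ : Measure E} [IsFiniteMeasure m₁]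
    [IsFiniteMeasure m₂] (κ : Measure E) [IsProbabilityMeasure κ] {ε : ℝ}
    (h : ∀ u, |m₁.real (Iic u) - m₂.real (Iic u)| ≤ ε) (x : E) :
    |(m₁ ∗ κ).real (Iic x) - (m₂ ∗ κ).real (Iic x)| ≤ ε := by
  have integrable (m : Measure E) [IsFiniteMeasure m] :
      Integrable (fun y => m.real (Iic (x - y))) κ :=
    (integrable_const (m.real univ)).mono'
      (measurable_measure_Iic_sub m x).ennreal_toReal.aestronglyMeasurable
      (ae_of_all _ fun y => by
        rw [Real.norm_of_nonneg measureReal_nonneg]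
        exact measureReal_mono (subset_univ _))
  rw [measureReal_conv_Iic, measureReal_conv_Iic, ← integral_sub (integrable m₁) (integrable m₂)]
  simpa using norm_integral_le_of_norm_le_const (μ := κ)
    (f := fun y => m₁.real (Iic (x - y)) - m₂.real (Iic (x - y))) (ae_of_all _ fun y => h (x - y))

theorem abs_measureReal_conv_conv_Iic_sub_le {m₁ m₂ κ₁ κ₂ : Measure E}
    [IsProbabilityMeasure m₁] [IsProbabilityMeasure m₂] [IsProbabilityMeasure κ₁]
    [IsProbabilityMeasure κ₂] {ε δ : ℝ}
    (hm : ∀ u, |m₁.real (Iic u) - m₂.real (Iic u)| ≤ ε)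
    (hκ : ∀ u, |κ₁.real (Iic u) - κ₂.real (Iic u)| ≤ δ) (x : E) :
    |(m₁ ∗ κ₁).real (Iic x) - (m₂ ∗ κ₂).real (Iic x)| ≤ ε + δ := by
  calc |(m₁ ∗ κ₁).real (Iic x) - (m₂ ∗ κ₂).real (Iic x)|
      ≤ |(m₁ ∗ κ₁).real (Iic x) - (m₂ ∗ κ₁).real (Iic x)|
        + |(κ₁ ∗ m₂).real (Iic x) - (κ₂ ∗ m₂).real (Iic x)| := by
        rw [conv_comm κ₁, conv_comm κ₂]; exact abs_sub_le _ _ _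
    _ ≤ ε + δ := add_le_add (abs_measureReal_conv_Iic_sub_le κ₁ hm x)
        (abs_measureReal_conv_Iic_sub_le m₂ hκ x)

end MeasureTheory.Measure

namespace ProbabilityTheory

open Measure

variable {Ω E ι : Type*} [MeasurableSpace Ω] {μ : Measure Ω}

theorem iIndepFun.map_sum_insert [AddCommMonoid E] [MeasurableSpace E] [MeasurableAdd₂ E]
    [IsFiniteMeasure μ] [DecidableEq ι] {X : ι → Ω → E}
    (hX : ∀ k, Measurable (X k)) (hindep : iIndepFun X μ) {s : Finset ι} {a : ι} (ha : a ∉ s) :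
    μ.map (fun ω => ∑ k ∈ insert a s, X k ω) = μ.map (X a) ∗ μ.map (fun ω => ∑ k ∈ s, X k ω) := by
  have hindep_sum : IndepFun (X a) (fun ω => ∑ k ∈ s, X k ω) μ := by
    simpa only [Finset.sum_fn] using (hindep.indepFun_finsetSum_of_notMem hX ha).symm
  simp_rw [Finset.sum_insert ha]
  exact hindep_sum.map_add_eq_map_conv_map (hX a) (s.measurable_sum fun k _ => hX k)

variable [AddCommGroup E] [PartialOrder E] [IsOrderedAddMonoid E]
  [MeasurableSpace E] [MeasurableAdd₂ E] [TopologicalSpace E] [OrderClosedTopology E]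
  [OpensMeasurableSpace E]

theorem iIndepFun.abs_map_sum_measureReal_Iic_sub_le [IsProbabilityMeasure μ]
    {X Y : ι → Ω → E} (hX : ∀ k, Measurable (X k)) (hY : ∀ k, Measurable (Y k))
    (hXindep : iIndepFun X μ) (hYindep : iIndepFun Y μ) {ε : ι → ℝ}
    (h : ∀ k u, |(μ.map (X k)).real (Iic u) - (μ.map (Y k)).real (Iic u)| ≤ ε k)
    (s : Finset ι) (x : E) :
    |(μ.map fun ω => ∑ k ∈ s, X k ω).real (Iic x) - (μ.map fun ω => ∑ k ∈ s, Y k ω).real (Iic x)|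
      ≤ ∑ k ∈ s, ε k := by
  classical
  induction s using Finset.induction_on generalizing x with
  | empty => simp
  | insert a s ha ih =>
    have isProb {Z : Ω → E} (hZ : Measurable Z) : IsProbabilityMeasure (μ.map Z) :=
      isProbabilityMeasure_map hZ.aemeasurable
    have := isProb (hX a)
    have := isProb (hY a)
    have := isProb (s.measurable_sum fun k _ => hX k)
    have := isProb (s.measurable_sum fun k _ => hY k)
    rw [hXindep.map_sum_insert hX ha, hYindep.map_sum_insert hY ha, Finset.sum_insert ha]
    exact abs_measureReal_conv_conv_Iic_sub_le (h a) ih x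

end ProbabilityTheory

theorem vecCDF_eq_measureReal_map {Ω : Type*} [MeasurableSpace Ω] (μ : Measure Ω) {d : ℕ}
    {Z : Ω → Fin d → ℝ} (hZ : Measurable Z) (x : Fin d → ℝ) :
    vecCDF μ Z x = (μ.map Z).real (Iic x) := by
  rw [map_measureReal_apply hZ measurableSet_Iic]
  rfl

theorem cdf_sum_sup_dist_le_sum_general
    {Ω : Type*} [MeasurableSpace Ω] (μ : Measure Ω) [IsProbabilityMeasure μ]
    (d : ℕ) (n : ℕ)
    (X Y : Fin n → Ω → Fin d → ℝ)
    (hXmeas : ∀ k, Measurable (X k)) (hYmeas : ∀ k, Measurable (Y k))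
    (hXindep : iIndepFun X μ)
    (hYindep : iIndepFun Y μ)
    (ε : Fin n → ℝ)
    (h : ∀ k : Fin n, ∀ x : Fin d → ℝ, |vecCDF μ (X k) x - vecCDF μ (Y k) x| ≤ ε k) :
    ∀ x : Fin d → ℝ,
      |vecCDF μ (fun ω => ∑ k, X k ω) x - vecCDF μ (fun ω => ∑ k, Y k ω) x| ≤
        ∑ k, ε k := by
  intro x
  simp_rw [vecCDF_eq_measureReal_map μ (hXmeas _), vecCDF_eq_measureReal_map μ (hYmeas _)] at h
  rw [vecCDF_eq_measureReal_map μ (Finset.univ.measurable_sum fun k _ => hXmeas k),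
    vecCDF_eq_measureReal_map μ (Finset.univ.measurable_sum fun k _ => hYmeas k)]
  exact hXindep.abs_map_sum_measureReal_Iic_sub_le hXmeas hYmeas hYindep h Finset.univ x

theorem cdf_sum_sup_dist_le_sum
    {Ω : Type*} [MeasurableSpace Ω] (μ : Measure Ω) [IsProbabilityMeasure μ]
    (d : ℕ) (hd : 1 ≤ d) (n : ℕ)
    (X Y : Fin n → Ω → Fin d → ℝ)
    (hXmeas : ∀ k, Measurable (X k)) (hYmeas : ∀ k, Measurable (Y k))
    (hXindep : iIndepFun X μ)
    (hYindep : iIndepFun Y μ)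
    (ε : Fin n → ℝ)
    (h : ∀ k : Fin n, ∀ x : Fin d → ℝ, |vecCDF μ (X k) x - vecCDF μ (Y k) x| ≤ ε k) :
    ∀ x : Fin d → ℝ,
      |vecCDF μ (fun ω => ∑ k, X k ω) x - vecCDF μ (fun ω => ∑ k, Y k ω) x| ≤
        ∑ k, ε k :=
  cdf_sum_sup_dist_le_sum_general μ d n X Y hXmeas hYmeas hXindep hYindep ε h
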